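/- arXiv:2403.10209 — 3 statements merged into one kernel-verified Lean document; each statement's English description precedes it below -/
import Mathlib

section
/- For ρ, α, τ with 0 < ρ ≤ 1/α and τ > 0, there exist a ∈ {ρ, 1/α} and b ∈ {0, 1/β} such that the Peaceman–Rachford map on f(x) = a·x²/2, g(x) = b·x²/2 is exactly a scaling by (1−τa)(1−τb)/((1+τa)(1+τb)), whose absolute value equals max_{a∈{ρ,1/α}} |1−τa|/(1+τa) when b = 0. Hence the Lipschitz bound max_{a∈{ρ,1/α}} |1−τa|/(1+τa) for Peaceman–Rachford on the class of ρ-strongly convex, (1/α)-smooth f and convex g is attained by quadratic functions. -/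
theorem peacemanRachford_quadratic_eq (τ a b x : ℝ) (ha : 1 + τ * a ≠ 0) (hb : 1 + τ * b ≠ 0) :
    2 * ((2 * (x / (1 + τ * a)) - x) / (1 + τ * b)) - 2 * (x / (1 + τ * a)) + x =
      ((1 - τ * a) * (1 - τ * b) / ((1 + τ * a) * (1 + τ * b))) * x := by
  field_simp
  ring

theorem abs_peacemanRachford_factor_of_zero (τ a : ℝ) (ha : 0 < 1 + τ * a) :
    |(1 - τ * a) * (1 - τ * 0) / ((1 + τ * a) * (1 + τ * 0))| = |1 - τ * a| / (1 + τ * a) := by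
  simp only [mul_zero, sub_zero, add_zero, mul_one, abs_div, abs_of_pos ha]

theorem prs_tight_general (α β ρ τ : ℝ) (hα : 0 < α) (hρ : 0 < ρ) (hτ : 0 < τ) :
    ∃ a ∈ ({ρ, 1 / α} : Set ℝ), ∃ b ∈ ({0, 1 / β} : Set ℝ), b = 0 ∧
      (∀ x : ℝ, 2 * ((2 * (x / (1 + τ * a)) - x) / (1 + τ * b))
          - 2 * (x / (1 + τ * a)) + x =
        ((1 - τ * a) * (1 - τ * b) / ((1 + τ * a) * (1 + τ * b))) * x) ∧
      |(1 - τ * a) * (1 - τ * b) / ((1 + τ * a) * (1 + τ * b))| =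
        max (|1 - τ * ρ| / (1 + τ * ρ))
          (|1 - τ * (1 / α)| / (1 + τ * (1 / α))) := by
  obtain ⟨a, ha, hmax⟩ : ∃ a ∈ ({ρ, 1 / α} : Set ℝ), |1 - τ * a| / (1 + τ * a) =
      max (|1 - τ * ρ| / (1 + τ * ρ)) (|1 - τ * (1 / α)| / (1 + τ * (1 / α))) := by
    rcases max_choice (|1 - τ * ρ| / (1 + τ * ρ)) (|1 - τ * (1 / α)| / (1 + τ * (1 / α)))
      with h | h
    exacts [⟨ρ, Or.inl rfl, h.symm⟩, ⟨1 / α, Or.inr rfl, h.symm⟩]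
  have hpos : 0 < 1 + τ * a := by rcases ha with rfl | rfl <;> positivity
  refine ⟨a, ha, 0, Or.inl rfl, rfl,
    fun x ↦ peacemanRachford_quadratic_eq τ a 0 x hpos.ne' (by simp), ?_⟩
  rw [abs_peacemanRachford_factor_of_zero τ a hpos, hmax]

/-- Tightness of the Peaceman–Rachford bound via quadratics: there are
a ∈ {ρ, 1/α}, b ∈ {0, 1/β} such that the PRS map on f = a x²/2, g = b x²/2
is an exact scaling attaining the bound. -/
theorem prs_tight (α β ρ τ : ℝ) (hα : 0 < α) (hβ : 0 < β) (hρ : 0 < ρ)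
    (hρα : ρ ≤ 1 / α) (hτ : 0 < τ) :
    ∃ a ∈ ({ρ, 1 / α} : Set ℝ), ∃ b ∈ ({0, 1 / β} : Set ℝ), b = 0 ∧
      (∀ x : ℝ, 2 * ((2 * (x / (1 + τ * a)) - x) / (1 + τ * b))
          - 2 * (x / (1 + τ * a)) + x =
        ((1 - τ * a) * (1 - τ * b) / ((1 + τ * a) * (1 + τ * b))) * x) ∧
      |(1 - τ * a) * (1 - τ * b) / ((1 + τ * a) * (1 + τ * b))| =
        max (|1 - τ * ρ| / (1 + τ * ρ))
          (|1 - τ * (1 / α)| / (1 + τ * (1 / α))) :=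
  prs_tight_general α β ρ τ hα hρ hτ
end

section
/- Let f be ρ-strongly convex (ρ ≥ 0), g be (1/β)-smooth convex, and τ > 0. Then for every a ∈ [ρ, ∞) ∩ {ρ, 1/α} and b ∈ {0, 1/β}, the Douglas–Rachford map on the quadratics f(x)=a·x²/2, g(x)=b·x²/2 achieves contraction factor exactly (1+τ²ab)/((1+τa)(1+τb)). Consequently, the worst-case contraction factor r_DRS(τ) over the class of ρ-strongly convex (1/α)-smooth f and convex (1/β)-smooth g satisfies r_DRS(τ) ≥ max over a ∈ {ρ, 1/α}, b ∈ {0, 1/β} of (1+τ²ab)/((1+τa)(1+τb)). -/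
/-!
The quadratics `f = a x² / 2` with `ρ ≤ a ≤ 1/α` and `g = b x² / 2` with `0 ≤ b ≤ 1/β` belong to
the function class. Their proximal maps are the scalings `x ↦ x / (1 + τ a)` and
`x ↦ x / (1 + τ b)`, so the Douglas–Rachford map is multiplication by
`(1 + τ² a b) / ((1 + τ a)(1 + τ b))`; comparing the images of `1` and `0` shows that every
worst-case contraction factor is at least this number, in particular at each of the four corners.
-/

open Set

def IsProx (τ : ℝ) (f p : ℝ → ℝ) : Prop :=
  ∀ x u, f (p x) + (p x - x) ^ 2 / (2 * τ) ≤ f u + (u - x) ^ 2 / (2 * τ)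

def drsMap (pf pg : ℝ → ℝ) (x : ℝ) : ℝ :=
  pg (2 * pf x - x) - pf x + x

def IsDRSContractionFactor (α β ρ τ r : ℝ) : Prop :=
  ∀ f g pf pg : ℝ → ℝ,
    ConvexOn ℝ univ (fun x => f x - ρ / 2 * x ^ 2) →
    ConvexOn ℝ univ (fun x => 1 / (2 * α) * x ^ 2 - f x) →
    ConvexOn ℝ univ g →
    ConvexOn ℝ univ (fun x => 1 / (2 * β) * x ^ 2 - g x) →
    IsProx τ f pf → IsProx τ g pg →
    ∀ x y, |drsMap pf pg x - drsMap pf pg y| ≤ r * |x - y|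

lemma convexOn_const_mul_sq {c : ℝ} (hc : 0 ≤ c) : ConvexOn ℝ univ (fun x : ℝ => c * x ^ 2) := by
  simpa only [smul_eq_mul] using (Even.convexOn_pow (n := 2) even_two).smul hc

lemma isProx_quadratic {τ a : ℝ} (hτ : 0 < τ) (ha : 0 < 1 + τ * a) :
    IsProx τ (fun x => a / 2 * x ^ 2) (fun x => x / (1 + τ * a)) := by
  intro x u
  obtain ⟨p, rfl⟩ : ∃ p, x = (1 + τ * a) * p := ⟨x / (1 + τ * a), by field_simp⟩
  simp only [mul_div_cancel_left₀ _ ha.ne']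
  have hgap : a / 2 * u ^ 2 + (u - (1 + τ * a) * p) ^ 2 / (2 * τ) -
      (a / 2 * p ^ 2 + (p - (1 + τ * a) * p) ^ 2 / (2 * τ)) =
      (1 + τ * a) / (2 * τ) * (u - p) ^ 2 := by
    field_simp
    ring
  have : 0 ≤ (1 + τ * a) / (2 * τ) * (u - p) ^ 2 := by positivity
  linarith

lemma drsMap_quadratic {τ a b : ℝ} (ha : 1 + τ * a ≠ 0) (hb : 1 + τ * b ≠ 0) (x : ℝ) :
    drsMap (fun x => x / (1 + τ * a)) (fun x => x / (1 + τ * b)) x =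
      (1 + τ ^ 2 * a * b) / ((1 + τ * a) * (1 + τ * b)) * x := by
  unfold drsMap
  field_simp
  ring

lemma IsDRSContractionFactor.quadratic_le {α β ρ τ r a b : ℝ}
    (hr : IsDRSContractionFactor α β ρ τ r) (hτ : 0 < τ) (ha : 0 < 1 + τ * a)
    (hρa : ρ ≤ a) (haα : a ≤ 1 / α) (hb : 0 ≤ b) (hbβ : b ≤ 1 / β) :
    (1 + τ ^ 2 * a * b) / ((1 + τ * a) * (1 + τ * b)) ≤ r := by
  have hb' : 0 < 1 + τ * b := by positivity
  have key := hr (fun x => a / 2 * x ^ 2) (fun x => b / 2 * x ^ 2) _ _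
    ((convexOn_const_mul_sq (c := (a - ρ) / 2) (by linarith)).congr fun x _ => by ring)
    ((convexOn_const_mul_sq (c := (1 / α - a) / 2) (by linarith)).congr fun x _ => by ring)
    (convexOn_const_mul_sq (by linarith))
    ((convexOn_const_mul_sq (c := (1 / β - b) / 2) (by linarith)).congr fun x _ => by ring)
    (isProx_quadratic hτ ha) (isProx_quadratic hτ hb') 1 0
  rw [drsMap_quadratic ha.ne' hb'.ne', drsMap_quadratic ha.ne' hb'.ne'] at key
  simpa using (le_abs_self _).trans key

theorem drs_lower_bound_general (α β ρ τ : ℝ) (hβ : 0 < β) (hρ : 0 ≤ ρ)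
    (hρα : ρ ≤ 1 / α) (hτ : 0 < τ) :
    (∀ a ∈ ({ρ, 1 / α} : Set ℝ), ∀ b ∈ ({0, 1 / β} : Set ℝ), ∀ x : ℝ,
      ((2 * (x / (1 + τ * a)) - x) / (1 + τ * b)) - x / (1 + τ * a) + x =
        ((1 + τ ^ 2 * a * b) / ((1 + τ * a) * (1 + τ * b))) * x) ∧
    ∀ r : ℝ,
      (∀ f g : ℝ → ℝ, ∀ pf pg : ℝ → ℝ,
        ConvexOn ℝ Set.univ (fun x => f x - ρ / 2 * x ^ 2) →
        ConvexOn ℝ Set.univ (fun x => (1 / (2 * α)) * x ^ 2 - f x) →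
        ConvexOn ℝ Set.univ g →
        ConvexOn ℝ Set.univ (fun x => (1 / (2 * β)) * x ^ 2 - g x) →
        (∀ x u, f (pf x) + (pf x - x) ^ 2 / (2 * τ) ≤ f u + (u - x) ^ 2 / (2 * τ)) →
        (∀ x u, g (pg x) + (pg x - x) ^ 2 / (2 * τ) ≤ g u + (u - x) ^ 2 / (2 * τ)) →
        ∀ x y : ℝ, |(pg (2 * pf x - x) - pf x + x) - (pg (2 * pf y - y) - pf y + y)|
          ≤ r * |x - y|) →
      r ≥ max
        (max ((1 + τ ^ 2 * ρ * 0) / ((1 + τ * ρ) * (1 + τ * 0)))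
             ((1 + τ ^ 2 * ρ * (1 / β)) / ((1 + τ * ρ) * (1 + τ * (1 / β)))))
        (max ((1 + τ ^ 2 * (1 / α) * 0) / ((1 + τ * (1 / α)) * (1 + τ * 0)))
             ((1 + τ ^ 2 * (1 / α) * (1 / β)) /
               ((1 + τ * (1 / α)) * (1 + τ * (1 / β))))) := by
  have hα₀ : 0 ≤ 1 / α := hρ.trans hρα
  have hβ₀ : 0 ≤ 1 / β := by positivity
  have hpos : ∀ c, 0 ≤ c → 0 < 1 + τ * c := fun c hc => by positivity
  refine ⟨fun a ha b hb x => drsMap_quadratic (hpos a ?_).ne' (hpos b ?_).ne' x, fun r hr => ?_⟩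
  · rcases ha with rfl | rfl <;> assumption
  · rcases hb with rfl | rfl
    exacts [le_rfl, hβ₀]
  · have hr : IsDRSContractionFactor α β ρ τ r := hr
    refine max_le (max_le ?_ ?_) (max_le ?_ ?_)
    · exact hr.quadratic_le hτ (hpos ρ hρ) le_rfl hρα le_rfl hβ₀
    · exact hr.quadratic_le hτ (hpos ρ hρ) le_rfl hρα hβ₀ le_rfl
    · exact hr.quadratic_le hτ (hpos _ hα₀) hρα le_rfl le_rfl hβ₀
    · exact hr.quadratic_le hτ (hpos _ hα₀) hρα le_rfl hβ₀ le_rfl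

/-- DRS lower bound via quadratics: on f = a x²/2, g = b x²/2 with
a ∈ {ρ, 1/α}, b ∈ {0, 1/β}, the DRS map scales exactly by
(1+τ²ab)/((1+τa)(1+τb)); hence any worst-case contraction factor r valid over
the whole class of ρ-strongly convex (1/α)-smooth f and convex (1/β)-smooth g
satisfies r ≥ max over the four corners. -/
theorem drs_lower_bound (α β ρ τ : ℝ) (hα : 0 < α) (hβ : 0 < β) (hρ : 0 ≤ ρ)
    (hρα : ρ ≤ 1 / α) (hτ : 0 < τ) :
    (∀ a ∈ ({ρ, 1 / α} : Set ℝ), ∀ b ∈ ({0, 1 / β} : Set ℝ), ∀ x : ℝ,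
      ((2 * (x / (1 + τ * a)) - x) / (1 + τ * b)) - x / (1 + τ * a) + x =
        ((1 + τ ^ 2 * a * b) / ((1 + τ * a) * (1 + τ * b))) * x) ∧
    ∀ r : ℝ,
      (∀ f g : ℝ → ℝ, ∀ pf pg : ℝ → ℝ,
        ConvexOn ℝ Set.univ (fun x => f x - ρ / 2 * x ^ 2) →
        ConvexOn ℝ Set.univ (fun x => (1 / (2 * α)) * x ^ 2 - f x) →
        ConvexOn ℝ Set.univ g →
        ConvexOn ℝ Set.univ (fun x => (1 / (2 * β)) * x ^ 2 - g x) →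
        (∀ x u, f (pf x) + (pf x - x) ^ 2 / (2 * τ) ≤ f u + (u - x) ^ 2 / (2 * τ)) →
        (∀ x u, g (pg x) + (pg x - x) ^ 2 / (2 * τ) ≤ g u + (u - x) ^ 2 / (2 * τ)) →
        ∀ x y : ℝ, |(pg (2 * pf x - x) - pf x + x) - (pg (2 * pf y - y) - pf y + y)|
          ≤ r * |x - y|) →
      r ≥ max
        (max ((1 + τ ^ 2 * ρ * 0) / ((1 + τ * ρ) * (1 + τ * 0)))
             ((1 + τ ^ 2 * ρ * (1 / β)) / ((1 + τ * ρ) * (1 + τ * (1 / β)))))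
        (max ((1 + τ ^ 2 * (1 / α) * 0) / ((1 + τ * (1 / α)) * (1 + τ * 0)))
             ((1 + τ ^ 2 * (1 / α) * (1 / β)) /
               ((1 + τ * (1 / α)) * (1 + τ * (1 / β))))) :=
  drs_lower_bound_general α β ρ τ hβ hρ hρα hτ
end

section
/- Let f be ρ-strongly convex and (1/α)-smooth, and g be μ-strongly convex and (1/β)-smooth, with 0 ≤ ρ ≤ 1/α, 0 ≤ μ ≤ 1/β, and τ > 0. Then the Peaceman–Rachford map Φ = R_{τg} ∘ R_{τf}, where R_{τf}(x) = 2·prox_{τf}(x) − x, is Lipschitz with constant (max_{a∈{ρ,1/α}} |1−τa|/(1+τa)) · (max_{b∈{μ,1/β}} |1−τb|/(1+τb)). -/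
set_option maxHeartbeats 1000000
open scoped RealInnerProductSpace

lemma aux_lim (A B K : ℝ) (hK : 0 ≤ K)
    (h : ∀ t : ℝ, 0 < t → t ≤ 1 → B ≤ A + t * K) : B ≤ A := by
  by_contra hc
  push_neg at hc
  have hK1 : 0 < K + 1 := by linarith
  set t := min 1 ((B - A) / (2 * (K + 1))) with ht
  have ht0 : 0 < t := lt_min one_pos (div_pos (by linarith) (by positivity))
  have ht1 : t ≤ 1 := min_le_left _ _
  have ht2 : t ≤ (B - A) / (2 * (K + 1)) := min_le_right _ _
  have h3 := h t ht0 ht1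
  have h4 : t * K ≤ (B - A) / (2 * (K + 1)) * K :=
    mul_le_mul_of_nonneg_right ht2 hK
  have h5 : (B - A) / (2 * (K + 1)) * K < (B - A) / 2 := by
    rw [div_mul_eq_mul_div, div_lt_div_iff₀ (by positivity) (by norm_num)]
    nlinarith
  linarith

lemma scalar_key (a b q r s C : ℝ) (ha : 0 ≤ a) (hab : a ≤ b) (hb : 0 < b)
    (hq : 0 ≤ q) (hr : 0 ≤ r) (hs : a * q ≤ s) (hcs : s ^ 2 ≤ q * r)
    (hK : r + a * b * q ≤ (a + b) * s) (hC0 : 0 ≤ C)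
    (hC1 : (1 - a) ^ 2 ≤ C ^ 2 * (1 + a) ^ 2)
    (hC2 : (1 - b) ^ 2 ≤ C ^ 2 * (1 + b) ^ 2) :
    q + r - 2 * s ≤ C ^ 2 * (q + r + 2 * s) := by
  have hs0 : 0 ≤ s := le_trans (by positivity) hs
  have habq : 0 ≤ a * b * q := by positivity
  have hab2 : 0 < a + b := by linarith
  have h1 : (r + a * b * q) ^ 2 ≤ ((a + b) * s) ^ 2 := by
    have := mul_le_mul hK hK (by linarith) (by positivity)
    nlinarith
  have h2 : ((a + b) * s) ^ 2 ≤ (a + b) ^ 2 * (q * r) := by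
    have := mul_le_mul_of_nonneg_left hcs (sq_nonneg (a + b))
    nlinarith
  have hT : (a ^ 2 * q - r) * (b ^ 2 * q - r) ≤ 0 := by nlinarith
  have hr1 : a ^ 2 * q ≤ r := by
    by_contra hcon
    push_neg at hcon
    have hx1 : 0 < a ^ 2 * q - r := by linarith
    have hx2 : 0 < b ^ 2 * q - r := by nlinarith
    linarith [mul_pos hx1 hx2]
  have hr2 : r ≤ b ^ 2 * q := by
    by_contra hcon
    push_neg at hcon
    have hb2 : a ^ 2 * q ≤ b ^ 2 * q := mul_le_mul_of_nonneg_right (by nlinarith) hq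
    have hx1 : r - a ^ 2 * q > 0 := by linarith
    have hx2 : r - b ^ 2 * q > 0 := by linarith
    have heq : (a ^ 2 * q - r) * (b ^ 2 * q - r) = (r - a ^ 2 * q) * (r - b ^ 2 * q) := by ring
    rw [heq] at hT
    linarith [mul_pos hx1 hx2]
  by_cases hq0 : q = 0
  · subst hq0
    have hr0 : r = 0 := le_antisymm (by linarith) hr
    subst hr0
    nlinarith
  have hq0' : 0 < q := lt_of_le_of_ne hq (Ne.symm hq0)
  by_cases habe : a = b
  · subst habe
    have hra : r = a ^ 2 * q := by linarith
    have hsa : s = a * q := by nlinarith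
    subst hra; rw [hsa]
    nlinarith [mul_nonneg hq (sub_nonneg.mpr hC1)]
  · have hab' : a < b := lt_of_le_of_ne hab habe
    have hX : 0 < (b ^ 2 - a ^ 2) * q := mul_pos (by nlinarith) hq0'
    set H := q * (C ^ 2 * (a + b + 2 * a * b) - (a + b - 2 * a * b))
            + r * (C ^ 2 * (a + b + 2) - (a + b - 2)) with hHdef
    have he1 : 0 ≤ (b ^ 2 * q - r) * (q * (a + b) * (C ^ 2 * (1 + a) ^ 2 - (1 - a) ^ 2)) := by
      apply mul_nonneg (by linarith)
      apply mul_nonneg (by positivity) (by linarith)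
    have he2 : 0 ≤ (r - a ^ 2 * q) * (q * (a + b) * (C ^ 2 * (1 + b) ^ 2 - (1 - b) ^ 2)) := by
      apply mul_nonneg (by linarith)
      apply mul_nonneg (by positivity) (by linarith)
    have hident : 0 ≤ H * ((b ^ 2 - a ^ 2) * q) := by
      have : H * ((b ^ 2 - a ^ 2) * q)
          = (b ^ 2 * q - r) * (q * (a + b) * (C ^ 2 * (1 + a) ^ 2 - (1 - a) ^ 2))
          + (r - a ^ 2 * q) * (q * (a + b) * (C ^ 2 * (1 + b) ^ 2 - (1 - b) ^ 2)) := by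
        rw [hHdef]; ring
      rw [this]; linarith
    have hH : 0 ≤ H := nonneg_of_mul_nonneg_right (by linarith [hident] : 0 ≤ (b ^ 2 - a ^ 2) * q * H) hX
    have he3 : 0 ≤ ((a + b) * s - (r + a * b * q)) * (C ^ 2 + 1) :=
      mul_nonneg (by linarith) (by positivity)
    have hfin : 0 ≤ (C ^ 2 * (q + r + 2 * s) - (q + r - 2 * s)) * (a + b) := by
      have hexp : (C ^ 2 * (q + r + 2 * s) - (q + r - 2 * s)) * (a + b)
          = H + 2 * (((a + b) * s - (r + a * b * q)) * (C ^ 2 + 1)) := by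
        rw [hHdef]; ring
      rw [hexp]; linarith
    nlinarith [hfin, hab2]


variable {E : Type*} [NormedAddCommGroup E] [InnerProductSpace ℝ E]

/-- subgradient inequality with strong convexity, for unit prox step -/
lemma sg1 (a : ℝ) (ha : 0 ≤ a) (H : E → ℝ)
    (hsc : ConvexOn ℝ Set.univ (fun w => H w - a / 2 * ‖w‖ ^ 2))
    (x u : E) (hu : ∀ w, H u + ‖u - x‖ ^ 2 / 2 ≤ H w + ‖w - x‖ ^ 2 / 2)
    (w : E) : H u + ⟪x - u, w - u⟫ + a / 2 * ‖w - u‖ ^ 2 ≤ H w := by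
  apply aux_lim (H w) _ ((a / 2 + 1 / 2) * ‖w - u‖ ^ 2) (by positivity)
  intro t ht0 ht1
  have hprox := hu (u + t • (w - u))
  have hn1 : ‖u + t • (w - u) - x‖ ^ 2
      = ‖u - x‖ ^ 2 + 2 * (t * ⟪u - x, w - u⟫) + t ^ 2 * ‖w - u‖ ^ 2 := by
    have : u + t • (w - u) - x = (u - x) + t • (w - u) := by abel
    rw [this, norm_add_sq_real, real_inner_smul_right, norm_smul]
    simp [mul_pow, sq_abs]
  have hcv := hsc.2 (Set.mem_univ u) (Set.mem_univ w)
      (by linarith : (0:ℝ) ≤ 1 - t) (le_of_lt ht0) (by ring)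
  simp only [smul_eq_mul] at hcv
  rw [show (1 - t) • u + t • w = u + t • (w - u) by module] at hcv
  have hn2 : ‖u + t • (w - u)‖ ^ 2
      = ‖u‖ ^ 2 + 2 * (t * ⟪u, w - u⟫) + t ^ 2 * ‖w - u‖ ^ 2 := by
    rw [norm_add_sq_real, real_inner_smul_right, norm_smul]
    simp [mul_pow, sq_abs]
  have hn3 : ‖w‖ ^ 2 = ‖u‖ ^ 2 + 2 * ⟪u, w - u⟫ + ‖w - u‖ ^ 2 := by
    rw [show w = u + (w - u) by abel, norm_add_sq_real]
    simp
  have hix : ⟪x - u, w - u⟫ = -⟪u - x, w - u⟫ := by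
    rw [show x - u = -(u - x) by abel, inner_neg_left]
  rw [hn1] at hprox
  rw [hn2, hn3] at hcv
  rw [hix]
  -- combine: divide the t-multiplied inequality
  have hmul : t * (H u + -⟪u - x, w - u⟫ + a / 2 * ‖w - u‖ ^ 2)
      ≤ t * (H w + t * ((a / 2 + 1 / 2) * ‖w - u‖ ^ 2)) := by nlinarith
  exact le_of_mul_le_mul_left (by linarith [hmul]) ht0

/-- descent lemma from smoothness -/
lemma ds1 (b : ℝ) (hb : 0 ≤ b) (H : E → ℝ)
    (hsm : ConvexOn ℝ Set.univ (fun w => b / 2 * ‖w‖ ^ 2 - H w))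
    (v pv : E) (hsg : ∀ w, H v + ⟪pv, w - v⟫ ≤ H w)
    (w : E) : H w ≤ H v + ⟪pv, w - v⟫ + b / 2 * ‖w - v‖ ^ 2 := by
  apply aux_lim _ (H w) (b / 2 * ‖w - v‖ ^ 2) (by positivity)
  intro t ht0 ht1
  have h1t : (0:ℝ) < 1 + t := by linarith
  have hcv := hsm.2 (Set.mem_univ (v - t • (w - v))) (Set.mem_univ w)
      (by positivity : (0:ℝ) ≤ 1 / (1 + t)) (by positivity : (0:ℝ) ≤ t / (1 + t))
      (by field_simp)
  simp only [smul_eq_mul] at hcv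
  have hcomb : (1 / (1 + t)) • (v - t • (w - v)) + (t / (1 + t)) • w = v := by
    match_scalars <;> field_simp <;> ring
  rw [hcomb] at hcv
  have hne : (1 + t) ≠ 0 := ne_of_gt h1t
  have hsgt := hsg (v - t • (w - v))
  rw [show v - t • (w - v) - v = -(t • (w - v)) by abel, inner_neg_right,
    real_inner_smul_right] at hsgt
  have hn1 : ‖v - t • (w - v)‖ ^ 2
      = ‖v‖ ^ 2 - 2 * (t * ⟪v, w - v⟫) + t ^ 2 * ‖w - v‖ ^ 2 := by
    rw [show v - t • (w - v) = v + (-t) • (w - v) by module, norm_add_sq_real,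
      real_inner_smul_right, norm_smul]
    simp [mul_pow, sq_abs]
    ring
  have hn3 : ‖w‖ ^ 2 = ‖v‖ ^ 2 + 2 * ⟪v, w - v⟫ + ‖w - v‖ ^ 2 := by
    rw [show w = v + (w - v) by abel, norm_add_sq_real]
    simp
  rw [hn1, hn3] at hcv
  have key : ∀ X Y Z : ℝ, Z ≤ 1 / (1 + t) * X + t / (1 + t) * Y → (1 + t) * Z ≤ X + t * Y := by
    intro X Y Z hZ
    have h' := mul_le_mul_of_nonneg_left hZ (le_of_lt h1t)
    have he : (1 + t) * (1 / (1 + t) * X + t / (1 + t) * Y) = X + t * Y := by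
      field_simp
    linarith [he ▸ h']
  have hcv2 := key _ _ _ hcv
  have hmul : t * (H w) ≤ t * ((H v + ⟪pv, w - v⟫ + b / 2 * ‖w - v‖ ^ 2)
      + t * (b / 2 * ‖w - v‖ ^ 2)) := by nlinarith
  exact le_of_mul_le_mul_left (by linarith [hmul]) ht0

-- conversion to shifted-function form (minimality)
lemma conv1 (a : ℝ) (H : E → ℝ) (p' u' w' : E)
    (h : H u' + ⟪p', w' - u'⟫ + a / 2 * ‖w' - u'‖ ^ 2 ≤ H w') :
    H u' - a / 2 * ‖u'‖ ^ 2 - ⟪p' - a • u', u'⟫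
      ≤ H w' - a / 2 * ‖w'‖ ^ 2 - ⟪p' - a • u', w'⟫ := by
  have e1 : ⟪p' - a • u', w'⟫ - ⟪p' - a • u', u'⟫ = ⟪p', w' - u'⟫ - a * ⟪u', w' - u'⟫ := by
    rw [← inner_sub_right, inner_sub_left, real_inner_smul_left]
  have e2 : ‖w'‖ ^ 2 = ‖u'‖ ^ 2 + 2 * ⟪u', w' - u'⟫ + ‖w' - u'‖ ^ 2 := by
    rw [show w' = u' + (w' - u') by abel, norm_add_sq_real]; simp
  have e2' : a / 2 * ‖w'‖ ^ 2
      = a / 2 * ‖u'‖ ^ 2 + a * ⟪u', w' - u'⟫ + a / 2 * ‖w' - u'‖ ^ 2 := by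
    rw [e2]; ring
  linarith

-- conversion to shifted-function form (descent)
lemma conv2 (a b : ℝ) (H : E → ℝ) (pv s v w : E)
    (h : H w ≤ H v + ⟪pv, w - v⟫ + b / 2 * ‖w - v‖ ^ 2) :
    H w - a / 2 * ‖w‖ ^ 2 - ⟪s, w⟫
      ≤ (H v - a / 2 * ‖v‖ ^ 2 - ⟪s, v⟫) + ⟪(pv - a • v) - s, w - v⟫
        + (b - a) / 2 * ‖w - v‖ ^ 2 := by
  have e1 : ⟪(pv - a • v) - s, w - v⟫
      = ⟪pv, w - v⟫ - a * ⟪v, w - v⟫ - ⟪s, w - v⟫ := by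
    rw [inner_sub_left, inner_sub_left, real_inner_smul_left]
  have e2 : ‖w‖ ^ 2 = ‖v‖ ^ 2 + 2 * ⟪v, w - v⟫ + ‖w - v‖ ^ 2 := by
    rw [show w = v + (w - v) by abel, norm_add_sq_real]; simp
  have e2' : a / 2 * ‖w‖ ^ 2
      = a / 2 * ‖v‖ ^ 2 + a * ⟪v, w - v⟫ + a / 2 * ‖w - v‖ ^ 2 := by
    rw [e2]; ring
  have e3 : ⟪s, w⟫ - ⟪s, v⟫ = ⟪s, w - v⟫ := by rw [← inner_sub_right]
  linarith

lemma coco_half (a b m c : ℝ) (ha : 0 ≤ a) (hab : a ≤ b) (hm : b - a ≤ m)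
    (hm0 : 0 < m) (hc0 : 0 < c) (hmc : m * c = 1)
    (H : E → ℝ)
    (hsc : ConvexOn ℝ Set.univ (fun w => H w - a / 2 * ‖w‖ ^ 2))
    (hsm : ConvexOn ℝ Set.univ (fun w => b / 2 * ‖w‖ ^ 2 - H w))
    (x y u v : E)
    (hu : ∀ w, H u + ‖u - x‖ ^ 2 / 2 ≤ H w + ‖w - x‖ ^ 2 / 2)
    (hv : ∀ w, H v + ‖v - y‖ ^ 2 / 2 ≤ H w + ‖w - y‖ ^ 2 / 2) :
    H u - a / 2 * ‖u‖ ^ 2 - ⟪(x - u) - a • u, u⟫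
      ≤ (H v - a / 2 * ‖v‖ ^ 2 - ⟪(x - u) - a • u, v⟫)
        - c / 2 * ‖((y - v) - a • v) - ((x - u) - a • u)‖ ^ 2 := by
  have hb : (0:ℝ) ≤ b := le_trans ha hab
  set su := (x - u) - a • u with hsu
  set sv := (y - v) - a • v with hsv
  set wst := v - c • (sv - su) with hwst
  -- minimality of shifted function at u, applied at wst
  have hsgu := sg1 a ha H hsc x u (by
    intro w; have := hu w; linarith [hu w]) wst
  have hA := conv1 a H (x - u) u wst hsgu
  -- descent at v applied at wst
  have hsgv : ∀ w, H v + ⟪y - v, w - v⟫ ≤ H w := by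
    intro w
    have h1 := sg1 a ha H hsc y v (fun w' => hv w') w
    have h2 : 0 ≤ a / 2 * ‖w - v‖ ^ 2 := by positivity
    linarith
  have hds := ds1 b hb H hsm v (y - v) hsgv wst
  have hB := conv2 a b H (y - v) su v wst hds
  rw [← hsv] at hB
  -- expansions at wst
  have ew1 : wst - v = -(c • (sv - su)) := by rw [hwst]; abel
  have ew2 : ⟪sv - su, wst - v⟫ = -(c * ‖sv - su‖ ^ 2) := by
    rw [ew1, inner_neg_right, real_inner_smul_right, real_inner_self_eq_norm_sq]
  have ew3 : ‖wst - v‖ ^ 2 = c ^ 2 * ‖sv - su‖ ^ 2 := by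
    rw [ew1, norm_neg, norm_smul, Real.norm_eq_abs, mul_pow, sq_abs]
  rw [ew2, ew3] at hB
  have hkey : (b - a) / 2 * (c ^ 2 * ‖sv - su‖ ^ 2) ≤ c / 2 * ‖sv - su‖ ^ 2 := by
    have h1 : (b - a) * (c ^ 2 * ‖sv - su‖ ^ 2) ≤ m * (c ^ 2 * ‖sv - su‖ ^ 2) :=
      mul_le_mul_of_nonneg_right hm (by positivity)
    have h2 : m * (c ^ 2 * ‖sv - su‖ ^ 2) = c * ‖sv - su‖ ^ 2 := by
      calc m * (c ^ 2 * ‖sv - su‖ ^ 2) = (m * c) * (c * ‖sv - su‖ ^ 2) := by ring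
      _ = c * ‖sv - su‖ ^ 2 := by rw [hmc]; ring
    linarith
  linarith

lemma coco (a b m : ℝ) (ha : 0 ≤ a) (hab : a ≤ b) (hm : b - a ≤ m) (hm0 : 0 < m)
    (H : E → ℝ)
    (hsc : ConvexOn ℝ Set.univ (fun w => H w - a / 2 * ‖w‖ ^ 2))
    (hsm : ConvexOn ℝ Set.univ (fun w => b / 2 * ‖w‖ ^ 2 - H w))
    (x y u v : E)
    (hu : ∀ w, H u + ‖u - x‖ ^ 2 / 2 ≤ H w + ‖w - x‖ ^ 2 / 2)
    (hv : ∀ w, H v + ‖v - y‖ ^ 2 / 2 ≤ H w + ‖w - y‖ ^ 2 / 2) :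
    ‖((x - u) - a • u) - ((y - v) - a • v)‖ ^ 2
      ≤ m * ⟪((x - u) - a • u) - ((y - v) - a • v), u - v⟫ := by
  set c := m⁻¹ with hc
  have hc0 : 0 < c := by positivity
  have hmc : m * c = 1 := mul_inv_cancel₀ (ne_of_gt hm0)
  have h1 := coco_half a b m c ha hab hm hm0 hc0 hmc H hsc hsm x y u v hu hv
  have h2 := coco_half a b m c ha hab hm hm0 hc0 hmc H hsc hsm y x v u hv hu
  set su := (x - u) - a • u with hsu
  set sv := (y - v) - a • v with hsv
  have e1 : ⟪su - sv, u - v⟫ = ⟪su, u⟫ - ⟪su, v⟫ - ⟪sv, u⟫ + ⟪sv, v⟫ := by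
    rw [inner_sub_left, inner_sub_right, inner_sub_right]; ring
  have e2 : ‖sv - su‖ ^ 2 = ‖su - sv‖ ^ 2 := by rw [norm_sub_rev]
  rw [e2] at h1
  have h3 : c * ‖su - sv‖ ^ 2 ≤ ⟪su - sv, u - v⟫ := by
    rw [e1]; linarith
  have h4 := mul_le_mul_of_nonneg_left h3 (le_of_lt hm0)
  calc ‖su - sv‖ ^ 2 = m * (c * ‖su - sv‖ ^ 2) := by rw [← mul_assoc, hmc, one_mul]
  _ ≤ m * ⟪su - sv, u - v⟫ := h4

lemma refl_lip1 (a b : ℝ) (ha : 0 ≤ a) (hab : a ≤ b) (hb : 0 < b)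
    (H : E → ℝ)
    (hsc : ConvexOn ℝ Set.univ (fun w => H w - a / 2 * ‖w‖ ^ 2))
    (hsm : ConvexOn ℝ Set.univ (fun w => b / 2 * ‖w‖ ^ 2 - H w))
    (p : E → E)
    (hp : ∀ z w, H (p z) + ‖p z - z‖ ^ 2 / 2 ≤ H w + ‖w - z‖ ^ 2 / 2)
    (x y : E) :
    ‖(2 • p x - x) - (2 • p y - y)‖
      ≤ max (|1 - a| / (1 + a)) (|1 - b| / (1 + b)) * ‖x - y‖ := by
  set u := p x with hu
  set v := p y with hv
  have hpu : ∀ w, H u + ‖u - x‖ ^ 2 / 2 ≤ H w + ‖w - x‖ ^ 2 / 2 := fun w => hp x w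
  have hpv : ∀ w, H v + ‖v - y‖ ^ 2 / 2 ≤ H w + ‖w - y‖ ^ 2 / 2 := fun w => hp y w
  set S := ((x - u) - a • u) - ((y - v) - a • v) with hS
  have hinn : 0 ≤ ⟪S, u - v⟫ := by
    have h1 := coco a b (b - a + 1) ha hab (by linarith) (by linarith)
      H hsc hsm x y u v hpu hpv
    nlinarith [sq_nonneg ‖S‖]
  have hcoco : ‖S‖ ^ 2 ≤ (b - a) * ⟪S, u - v⟫ := by
    apply aux_lim _ _ (⟪S, u - v⟫) hinn
    intro t ht0 ht1
    have h1 := coco a b (b - a + t) ha hab (by linarith) (by linarith)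
      H hsc hsm x y u v hpu hpv
    nlinarith
  set Δ := u - v with hΔ
  set δ := (x - y) - Δ with hδ
  have hSd : S = δ - a • Δ := by rw [hS, hδ, hΔ]; module
  set q := ‖Δ‖ ^ 2 with hq
  set r := ‖δ‖ ^ 2 with hr
  set s := ⟪Δ, δ⟫ with hs
  have einn : ⟪S, Δ⟫ = s - a * q := by
    rw [hSd, inner_sub_left, real_inner_smul_left, real_inner_self_eq_norm_sq,
      real_inner_comm]
  have enorm : ‖S‖ ^ 2 = r - 2 * (a * s) + a ^ 2 * q := by
    rw [hSd, norm_sub_sq_real, real_inner_smul_right, norm_smul, Real.norm_eq_abs,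
      mul_pow, sq_abs, real_inner_comm]
    try ring
  rw [einn] at hinn hcoco
  rw [enorm] at hcoco
  have hc2 : a * q ≤ s := by nlinarith
  have hc1 : r + a * b * q ≤ (a + b) * s := by nlinarith
  have hcs : s ^ 2 ≤ q * r := by
    have := real_inner_mul_inner_self_le Δ δ
    rw [real_inner_self_eq_norm_sq, real_inner_self_eq_norm_sq] at this
    nlinarith
  set C := max (|1 - a| / (1 + a)) (|1 - b| / (1 + b)) with hC
  have h1a : (0:ℝ) < 1 + a := by linarith
  have h1b : (0:ℝ) < 1 + b := by linarith
  have hC0 : 0 ≤ C := le_trans (div_nonneg (abs_nonneg _) (le_of_lt h1a)) (le_max_left _ _)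
  have hC1 : (1 - a) ^ 2 ≤ C ^ 2 * (1 + a) ^ 2 := by
    have h := le_max_left (|1 - a| / (1 + a)) (|1 - b| / (1 + b))
    rw [div_le_iff₀ h1a] at h
    nlinarith [abs_nonneg (1 - a), sq_abs (1 - a)]
  have hC2 : (1 - b) ^ 2 ≤ C ^ 2 * (1 + b) ^ 2 := by
    have h := le_max_right (|1 - a| / (1 + a)) (|1 - b| / (1 + b))
    rw [div_le_iff₀ h1b] at h
    nlinarith [abs_nonneg (1 - b), sq_abs (1 - b)]
  have hscalar := scalar_key a b q r s C ha hab hb (by positivity) (by positivity)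
    hc2 hcs hc1 hC0 hC1 hC2
  have hvec : (2 • p x - x) - (2 • p y - y) = Δ - δ := by
    show (2 • u - x) - (2 • v - y) = Δ - δ
    rw [hδ, hΔ, two_smul ℕ u, two_smul ℕ v]
    abel
  have hxy : x - y = Δ + δ := by rw [hδ]; abel
  have hn1 : ‖Δ - δ‖ ^ 2 = q - 2 * s + r := by
    rw [norm_sub_sq_real]
  have hn2 : ‖x - y‖ ^ 2 = q + 2 * s + r := by
    rw [hxy, norm_add_sq_real]
  have hfin : ‖(2 • p x - x) - (2 • p y - y)‖ ^ 2 ≤ (C * ‖x - y‖) ^ 2 := by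
    rw [hvec, hn1]
    have : (C * ‖x - y‖) ^ 2 = C ^ 2 * (q + 2 * s + r) := by rw [mul_pow, hn2]
    rw [this]
    linarith
  have := Real.sqrt_le_sqrt hfin
  rwa [Real.sqrt_sq (norm_nonneg _),
    Real.sqrt_sq (mul_nonneg hC0 (norm_nonneg _))] at this

lemma refl_lip (σ L τ : ℝ) (hσ : 0 ≤ σ) (hσL : σ ≤ L) (hL : 0 < L) (hτ : 0 < τ)
    (h : E → ℝ)
    (hsc : ConvexOn ℝ Set.univ (fun w => h w - σ / 2 * ‖w‖ ^ 2))
    (hsm : ConvexOn ℝ Set.univ (fun w => L / 2 * ‖w‖ ^ 2 - h w))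
    (p : E → E)
    (hp : ∀ z w, h (p z) + ‖p z - z‖ ^ 2 / (2 * τ) ≤ h w + ‖w - z‖ ^ 2 / (2 * τ))
    (x y : E) :
    ‖(2 • p x - x) - (2 • p y - y)‖
      ≤ max (|1 - τ * σ| / (1 + τ * σ)) (|1 - τ * L| / (1 + τ * L)) * ‖x - y‖ := by
  set H : E → ℝ := fun w => τ * h w with hH
  have hτ' : (0:ℝ) ≤ τ := le_of_lt hτ
  have hsc' : ConvexOn ℝ Set.univ (fun w => H w - (τ * σ) / 2 * ‖w‖ ^ 2) := by
    have h1 := ConvexOn.smul hτ' hsc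
    have : (fun w : E => τ • (h w - σ / 2 * ‖w‖ ^ 2)) = fun w => H w - (τ * σ) / 2 * ‖w‖ ^ 2 := by
      funext w; simp only [hH, smul_eq_mul]; ring
    rwa [this] at h1
  have hsm' : ConvexOn ℝ Set.univ (fun w => (τ * L) / 2 * ‖w‖ ^ 2 - H w) := by
    have h1 := ConvexOn.smul hτ' hsm
    have : (fun w : E => τ • (L / 2 * ‖w‖ ^ 2 - h w)) = fun w => (τ * L) / 2 * ‖w‖ ^ 2 - H w := by
      funext w; simp only [hH, smul_eq_mul]; ring
    rwa [this] at h1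
  have hp' : ∀ z w, H (p z) + ‖p z - z‖ ^ 2 / 2 ≤ H w + ‖w - z‖ ^ 2 / 2 := by
    intro z w
    have h0 := mul_le_mul_of_nonneg_left (hp z w) hτ'
    have e : ∀ A B : ℝ, τ * (A + B / (2 * τ)) = τ * A + B / 2 := by
      intro A B; field_simp
    rw [e, e] at h0
    exact h0
  exact refl_lip1 (τ * σ) (τ * L) (by positivity) (by nlinarith) (by positivity)
    H hsc' hsm' p hp' x y


/-- Peaceman–Rachford contraction when f is ρ-strongly convex (1/α)-smooth and
g is μ-strongly convex (1/β)-smooth. -/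
theorem prs_contraction_strong (n : ℕ) (ρ α μ β τ : ℝ) (hα : 0 < α)
    (hβ : 0 < β) (hρ : 0 ≤ ρ) (hρα : ρ ≤ 1 / α) (hμ : 0 ≤ μ) (hμβ : μ ≤ 1 / β)
    (hτ : 0 < τ)
    (f g : EuclideanSpace ℝ (Fin n) → ℝ)
    (hfsc : ConvexOn ℝ Set.univ (fun x => f x - ρ / 2 * ‖x‖ ^ 2))
    (hfsm : ConvexOn ℝ Set.univ (fun x => (1 / (2 * α)) * ‖x‖ ^ 2 - f x))
    (hgsc : ConvexOn ℝ Set.univ (fun x => g x - μ / 2 * ‖x‖ ^ 2))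
    (hgsm : ConvexOn ℝ Set.univ (fun x => (1 / (2 * β)) * ‖x‖ ^ 2 - g x))
    (pf pg : EuclideanSpace ℝ (Fin n) → EuclideanSpace ℝ (Fin n))
    (hpf : ∀ x u, f (pf x) + ‖pf x - x‖ ^ 2 / (2 * τ) ≤ f u + ‖u - x‖ ^ 2 / (2 * τ))
    (hpg : ∀ x u, g (pg x) + ‖pg x - x‖ ^ 2 / (2 * τ) ≤ g u + ‖u - x‖ ^ 2 / (2 * τ)) :
    ∀ x y, ‖(2 • pg (2 • pf x - x) - 2 • pf x + x)
        - (2 • pg (2 • pf y - y) - 2 • pf y + y)‖ ≤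
      (max (|1 - τ * ρ| / (1 + τ * ρ)) (|1 - τ * (1 / α)| / (1 + τ * (1 / α)))) *
      (max (|1 - τ * μ| / (1 + τ * μ)) (|1 - τ * (1 / β)| / (1 + τ * (1 / β)))) *
      ‖x - y‖ := by
  intro x y
  have hfsm' : ConvexOn ℝ Set.univ (fun x => (1 / α) / 2 * ‖x‖ ^ 2 - f x) := by
    have : (fun x : EuclideanSpace ℝ (Fin n) => (1 / (2 * α)) * ‖x‖ ^ 2 - f x)
        = fun x => (1 / α) / 2 * ‖x‖ ^ 2 - f x := by
      funext w; ring_nf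
    rwa [this] at hfsm
  have hgsm' : ConvexOn ℝ Set.univ (fun x => (1 / β) / 2 * ‖x‖ ^ 2 - g x) := by
    have : (fun x : EuclideanSpace ℝ (Fin n) => (1 / (2 * β)) * ‖x‖ ^ 2 - g x)
        = fun x => (1 / β) / 2 * ‖x‖ ^ 2 - g x := by
      funext w; ring_nf
    rwa [this] at hgsm
  set Cf := max (|1 - τ * ρ| / (1 + τ * ρ)) (|1 - τ * (1 / α)| / (1 + τ * (1 / α))) with hCf
  set Cg := max (|1 - τ * μ| / (1 + τ * μ)) (|1 - τ * (1 / β)| / (1 + τ * (1 / β))) with hCg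
  have h1 := refl_lip ρ (1 / α) τ hρ hρα (by positivity) hτ f hfsc hfsm' pf hpf x y
  set X := 2 • pf x - x with hX
  set Y := 2 • pf y - y with hY
  have h2 := refl_lip μ (1 / β) τ hμ hμβ (by positivity) hτ g hgsc hgsm' pg hpg X Y
  have hCg0 : 0 ≤ Cg := by
    have : (0:ℝ) ≤ |1 - τ * μ| / (1 + τ * μ) :=
      div_nonneg (abs_nonneg _) (by positivity)
    exact le_trans this (le_max_left _ _)
  have hgoal : (2 • pg X - 2 • pf x + x) - (2 • pg Y - 2 • pf y + y)
      = (2 • pg X - X) - (2 • pg Y - Y) := by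
    rw [hX, hY]; abel
  rw [hgoal]
  calc ‖(2 • pg X - X) - (2 • pg Y - Y)‖ ≤ Cg * ‖X - Y‖ := h2
  _ ≤ Cg * (Cf * ‖x - y‖) := mul_le_mul_of_nonneg_left h1 hCg0
  _ = Cf * Cg * ‖x - y‖ := by ring
end
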